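/- (Lipschitz constant of the Cayley operator.) Let η ∈ ℝⁿ be a positive vector and let F : ℝⁿ → ℝⁿ be continuously differentiable with μ_{∞,η⁻¹}(−DF(x)) ≤ −c for all x ∈ ℝⁿ, where c ≥ 0, and let d > 0 be a diagonal bound for F. Let α ∈ (0, 1/d], and suppose x, y, u, v ∈ ℝⁿ satisfy x + αF(x) = u and y + αF(y) = v. Then ‖(2x − u) − (2y − v)‖_{∞,η⁻¹} ≤ ((1 − αc)/(1 + αc)) ‖u − v‖_{∞,η⁻¹}; that is, the reflected resolvent R_{αF} = 2(Id + αF)^{−1} − Id is Lipschitz with constant (1 − αc)/(1 + αc) ≤ 1. -/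

import Mathlib

open Filter

/-- Diagonally weighted ℓ∞ norm: ‖x‖_{∞,η⁻¹} = max_i |x_i|/η_i. -/
noncomputable def wNorm {n : ℕ} (η x : Fin n → ℝ) : ℝ := ⨆ i, |x i| / η i

/-- Diagonally weighted ℓ∞ logarithmic norm of a matrix. -/
noncomputable def logNorm {n : ℕ} (η : Fin n → ℝ) (A : Matrix (Fin n) (Fin n) ℝ) : ℝ :=
  ⨆ i, (A i i + ∑ j ∈ Finset.univ.erase i, (η j / η i) * |A i j|)

/-- Jacobian matrix of `F` at `x`: (DF(x))_{ij} = ∂F_i/∂x_j. -/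
noncomputable def jac {n : ℕ} (F : (Fin n → ℝ) → (Fin n → ℝ)) (x : Fin n → ℝ) :
    Matrix (Fin n) (Fin n) ℝ :=
  fun i j => fderiv ℝ F x (Pi.single j 1) i

/-!
With `z = x - y` we have `u - v = z + α (F x - F y)`, and the reflected difference is
`z - α (F x - F y)`. By the mean value theorem along the segment from `y` to `x`, each coordinate
of these vectors is a value of the corresponding coordinate of `(I ± α DF(p)) z` for some `p`.
Monotonicity makes every row of `DF` diagonally dominant with margin `c` in the `η`-weighted
sense, and `α DF_ii ≤ α d ≤ 1` keeps the diagonal of `I - α DF` nonnegative. Hence `I - α DF`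
contracts the weighted norm by `1 - αc`, while at a coordinate where `|z_i| / η_i` is maximal
`I + α DF` expands `z` by at least `1 + αc`.
-/

open Matrix

variable {n : ℕ} {η : Fin n → ℝ}

section WeightedNorm

lemma abs_div_le_wNorm (x : Fin n → ℝ) (i : Fin n) : |x i| / η i ≤ wNorm η x :=
  le_ciSup (f := fun i => |x i| / η i) (Set.finite_range _).bddAbove i

lemma abs_le_mul_wNorm (hη : ∀ i, 0 < η i) (x : Fin n → ℝ) (i : Fin n) :
    |x i| ≤ η i * wNorm η x :=
  (div_le_iff₀' (hη i)).1 (abs_div_le_wNorm x i)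

lemma wNorm_nonneg (hη : ∀ i, 0 < η i) (x : Fin n → ℝ) : 0 ≤ wNorm η x :=
  Real.iSup_nonneg fun i => div_nonneg (abs_nonneg _) (hη i).le

lemma wNorm_le_of_abs_le (hη : ∀ i, 0 < η i) {x : Fin n → ℝ} {m : ℝ} (hm : 0 ≤ m)
    (h : ∀ i, |x i| ≤ η i * m) : wNorm η x ≤ m :=
  Real.iSup_le (fun i => (div_le_iff₀' (hη i)).2 (h i)) hm

lemma exists_abs_eq_mul_wNorm [Nonempty (Fin n)] (hη : ∀ i, 0 < η i) (x : Fin n → ℝ) :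
    ∃ i, |x i| = η i * wNorm η x := by
  obtain ⟨i, hi⟩ := exists_eq_ciSup_of_finite (f := fun i => |x i| / η i)
  exact ⟨i, by rw [wNorm, ← hi]; field_simp [(hη i).ne']⟩

end WeightedNorm

section RowBounds

noncomputable def offDiagRowSum (η : Fin n → ℝ) (A : Matrix (Fin n) (Fin n) ℝ) (i : Fin n) :
    ℝ :=
  ∑ j ∈ Finset.univ.erase i, (η j / η i) * |A i j|

variable {A : Matrix (Fin n) (Fin n) ℝ}

lemma offDiagRowSum_nonneg (hη : ∀ i, 0 < η i) (A : Matrix (Fin n) (Fin n) ℝ) (i : Fin n) :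
    0 ≤ offDiagRowSum η A i :=
  Finset.sum_nonneg fun j _ => mul_nonneg (div_nonneg (hη j).le (hη i).le) (abs_nonneg _)

lemma add_offDiagRowSum_le_logNorm (A : Matrix (Fin n) (Fin n) ℝ) (i : Fin n) :
    A i i + offDiagRowSum η A i ≤ logNorm η A :=
  le_ciSup (f := fun i => A i i + offDiagRowSum η A i) (Set.finite_range _).bddAbove i

lemma add_offDiagRowSum_le_of_logNorm_neg_le {c : ℝ} (h : logNorm η (-A) ≤ -c) (i : Fin n) :
    c + offDiagRowSum η A i ≤ A i i := by
  have := (add_offDiagRowSum_le_logNorm (-A) i).trans h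
  simp only [offDiagRowSum, Matrix.neg_apply, abs_neg] at this
  rw [offDiagRowSum]
  linarith

lemma mulVec_apply_eq_diag_add_sum_erase (A : Matrix (Fin n) (Fin n) ℝ) (z : Fin n → ℝ)
    (i : Fin n) : (A *ᵥ z) i = A i i * z i + ∑ j ∈ Finset.univ.erase i, A i j * z j := by
  rw [mulVec, dotProduct, ← Finset.add_sum_erase _ _ (Finset.mem_univ i)]

lemma abs_sum_erase_mul_le (hη : ∀ i, 0 < η i) (A : Matrix (Fin n) (Fin n) ℝ)
    (z : Fin n → ℝ) (i : Fin n) :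
    |∑ j ∈ Finset.univ.erase i, A i j * z j| ≤ offDiagRowSum η A i * (η i * wNorm η z) := by
  rw [offDiagRowSum, Finset.sum_mul]
  refine (Finset.abs_sum_le_sum_abs _ _).trans (Finset.sum_le_sum fun j _ => ?_)
  calc |A i j * z j| ≤ |A i j| * (η j * wNorm η z) := by
        rw [abs_mul]; gcongr; exact abs_le_mul_wNorm hη z j
    _ = η j / η i * |A i j| * (η i * wNorm η z) := by field_simp [(hη i).ne']

lemma abs_sub_mul_mulVec_le (hη : ∀ i, 0 < η i) {α c : ℝ} (hα : 0 ≤ α) {i : Fin n}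
    (hdiag : α * A i i ≤ 1) (hrow : c + offDiagRowSum η A i ≤ A i i) (z : Fin n → ℝ) :
    |z i - α * (A *ᵥ z) i| ≤ (1 - α * c) * (η i * wNorm η z) := by
  rw [mulVec_apply_eq_diag_add_sum_erase]
  set S := ∑ j ∈ Finset.univ.erase i, A i j * z j
  have hS := abs_sum_erase_mul_le hη A z i
  have hz := abs_le_mul_wNorm hη z i
  have hN : 0 ≤ η i * wNorm η z := mul_nonneg (hη i).le (wNorm_nonneg hη z)
  calc |z i - α * (A i i * z i + S)| = |(1 - α * A i i) * z i - α * S| := by ring_nf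
    _ ≤ (1 - α * A i i) * |z i| + α * |S| := by
        refine (abs_sub _ _).trans_eq ?_
        rw [abs_mul, abs_mul, abs_of_nonneg (sub_nonneg.2 hdiag), abs_of_nonneg hα]
    _ ≤ (1 - α * A i i) * (η i * wNorm η z) + α * (offDiagRowSum η A i * (η i * wNorm η z)) := by
        gcongr
    _ ≤ (1 - α * c) * (η i * wNorm η z) := by
        have hmargin : 0 ≤ A i i - c - offDiagRowSum η A i := by linarith
        nlinarith [mul_nonneg hα (mul_nonneg hN hmargin)]

lemma mul_le_mul_add_mul_mulVec (hη : ∀ i, 0 < η i) {α c : ℝ} (hα : 0 ≤ α) {i : Fin n}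
    (hrow : c + offDiagRowSum η A i ≤ A i i) {z : Fin n → ℝ}
    (hi : |z i| = η i * wNorm η z) {s : ℝ} (hs : |s| ≤ 1) (hsz : s * z i = |z i|) :
    (1 + α * c) * (η i * wNorm η z) ≤ s * (z i + α * (A *ᵥ z) i) := by
  rw [mulVec_apply_eq_diag_add_sum_erase]
  set S := ∑ j ∈ Finset.univ.erase i, A i j * z j
  have hS := abs_sum_erase_mul_le hη A z i
  have hsS : -|S| ≤ s * S := by
    have : |s * S| ≤ |S| := by rw [abs_mul]; exact mul_le_of_le_one_left (abs_nonneg _) hs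
    linarith [neg_abs_le (s * S)]
  have hN : 0 ≤ η i * wNorm η z := mul_nonneg (hη i).le (wNorm_nonneg hη z)
  have : s * (z i + α * (A i i * z i + S)) = (1 + α * A i i) * |z i| + α * (s * S) := by
    rw [← hsz]; ring
  have hmargin : 0 ≤ A i i - c - offDiagRowSum η A i := by linarith
  rw [this, hi]
  nlinarith [mul_nonneg hα (mul_nonneg hN hmargin), mul_le_mul_of_nonneg_left hsS hα]

end RowBounds

section LineSegment

variable {F : (Fin n → ℝ) → (Fin n → ℝ)}

lemma fderiv_apply_eq_jac_mulVec (p z : Fin n → ℝ) :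
    fderiv ℝ F p z = jac F p *ᵥ z :=
  (LinearMap.toMatrix'_mulVec (fderiv ℝ F p : (Fin n → ℝ) →ₗ[ℝ] Fin n → ℝ) z).symm

lemma hasDerivAt_apply_add_smul (hF : Differentiable ℝ F) (y z : Fin n → ℝ) (i : Fin n)
    (t : ℝ) : HasDerivAt (fun t : ℝ => F (y + t • z) i) ((jac F (y + t • z) *ᵥ z) i) t := by
  have hγ : HasDerivAt (fun t : ℝ => y + t • z) z t := by
    simpa using ((hasDerivAt_id t).smul_const z).const_add y
  rw [← fderiv_apply_eq_jac_mulVec]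
  exact hasDerivAt_pi.1 ((hF _).hasFDerivAt.comp_hasDerivAt t hγ) i

lemma wNorm_sub_sub_smul_le (hη : ∀ i, 0 < η i) (hF : Differentiable ℝ F) {α c : ℝ}
    (hα : 0 ≤ α) (hαc : α * c ≤ 1) (hdiag : ∀ p i, α * jac F p i i ≤ 1)
    (hrow : ∀ p i, c + offDiagRowSum η (jac F p) i ≤ jac F p i i) (x y : Fin n → ℝ) :
    wNorm η (x - y - α • (F x - F y)) ≤ (1 - α * c) * wNorm η (x - y) := by
  refine wNorm_le_of_abs_le hη (mul_nonneg (by linarith) (wNorm_nonneg hη _)) fun i => ?_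
  set z := x - y
  have hg (t : ℝ) : HasDerivAt (fun t : ℝ => t * z i - α * F (y + t • z) i)
      (z i - α * (jac F (y + t • z) *ᵥ z) i) t :=
    (((hasDerivAt_id' t).mul_const (z i)).sub
      ((hasDerivAt_apply_add_smul hF y z i t).const_mul α)).congr_deriv (by rw [one_mul])
  have hval : (z - α • (F x - F y)) i
      = (1 * z i - α * F (y + (1 : ℝ) • z) i) - (0 * z i - α * F (y + (0 : ℝ) • z) i) := by
    simp [z]; ring
  rw [hval, ← Real.norm_eq_abs]
  exact norm_image_sub_le_of_norm_deriv_le_segment_01' (fun t _ => (hg t).hasDerivWithinAt)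
    fun t _ => (abs_sub_mul_mulVec_le hη hα (hdiag _ i) (hrow _ i) z).trans_eq (by ring)

lemma mul_wNorm_le_wNorm_add_smul_sub [Nonempty (Fin n)] (hη : ∀ i, 0 < η i)
    (hF : Differentiable ℝ F) {α c : ℝ} (hα : 0 ≤ α)
    (hrow : ∀ p i, c + offDiagRowSum η (jac F p) i ≤ jac F p i i) (x y : Fin n → ℝ) :
    (1 + α * c) * wNorm η (x - y) ≤ wNorm η (x - y + α • (F x - F y)) := by
  set z := x - y
  obtain ⟨i, hi⟩ := exists_abs_eq_mul_wNorm hη z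
  -- `s` is the sign of `z i`; it lets a single monotonicity argument handle both signs.
  obtain ⟨s, hs, hsz⟩ : ∃ s : ℝ, |s| ≤ 1 ∧ s * z i = |z i| := by
    rcases le_or_gt 0 (z i) with h | h
    · exact ⟨1, by simp, by simp [abs_of_nonneg h]⟩
    · exact ⟨-1, by simp, by simp [abs_of_neg h]⟩
  set K := (1 + α * c) * (η i * wNorm η z)
  have hg (t : ℝ) : HasDerivAt (fun t : ℝ => s * (t * z i + α * F (y + t • z) i) - K * t)
      (s * (z i + α * (jac F (y + t • z) *ᵥ z) i) - K) t :=
    (((((hasDerivAt_id' t).mul_const (z i)).add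
      ((hasDerivAt_apply_add_smul hF y z i t).const_mul α)).const_mul s).sub
      ((hasDerivAt_id' t).const_mul K)).congr_deriv (by rw [one_mul, mul_one])
  have hmono := monotone_of_hasDerivAt_nonneg hg
    fun t => sub_nonneg.2 (mul_le_mul_add_mul_mulVec hη hα (hrow _ i) hi hs hsz)
  have hK : K ≤ |(z + α • (F x - F y)) i| := by
    have := hmono zero_le_one
    simp only [zero_mul, zero_smul, add_zero, one_mul, one_smul, zero_add, mul_zero, sub_zero,
      z, add_sub_cancel, mul_one, Pi.sub_apply] at this
    calc K ≤ s * ((z + α • (F x - F y)) i) := by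
          simp only [Pi.add_apply, Pi.sub_apply, Pi.smul_apply, smul_eq_mul, z]
          linear_combination this
      _ ≤ |s * ((z + α • (F x - F y)) i)| := le_abs_self _
      _ ≤ |(z + α • (F x - F y)) i| := by
        rw [abs_mul]; exact mul_le_of_le_one_left (abs_nonneg _) hs
  calc (1 + α * c) * wNorm η z ≤ |(z + α • (F x - F y)) i| / η i := by
        rw [le_div_iff₀ (hη i)]; linarith
    _ ≤ wNorm η (z + α • (F x - F y)) := abs_div_le_wNorm _ i

end LineSegment

/-- Lipschitz constant of the Cayley (reflected resolvent) operator. -/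
theorem stmt_5 {n : ℕ} (η : Fin n → ℝ) (hη : ∀ i, 0 < η i)
    (F : (Fin n → ℝ) → (Fin n → ℝ)) (hF : ContDiff ℝ 1 F)
    (c : ℝ) (hc : 0 ≤ c) (hmono : ∀ x, logNorm η (-(jac F x)) ≤ -c)
    (d : ℝ) (hd : 0 < d) (hdiag : ∀ x i, jac F x i i ≤ d)
    (α : ℝ) (hα : α ∈ Set.Ioc (0 : ℝ) (1 / d))
    (x y u v : Fin n → ℝ) (hx : x + α • F x = u) (hy : y + α • F y = v) :
    wNorm η (((2 : ℝ) • x - u) - ((2 : ℝ) • y - v)) ≤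
      ((1 - α * c) / (1 + α * c)) * wNorm η (u - v) := by
  rcases isEmpty_or_nonempty (Fin n) with hn | hn
  · simp [wNorm]
  obtain ⟨hα0, hαd⟩ := hα
  replace hαd : α * d ≤ 1 := by rwa [le_div_iff₀ hd] at hαd
  have hrow p := add_offDiagRowSum_le_of_logNorm_neg_le (hmono p)
  have hαdiag p i : α * jac F p i i ≤ 1 :=
    (mul_le_mul_of_nonneg_left (hdiag p i) hα0.le).trans hαd
  have hαc : α * c ≤ 1 := by
    obtain ⟨i⟩ := hn
    have := offDiagRowSum_nonneg hη (jac F x) i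
    nlinarith [hrow x i, hdiag x i]
  have hF' := hF.differentiable one_ne_zero
  have hlhs : (2 : ℝ) • x - u - ((2 : ℝ) • y - v) = x - y - α • (F x - F y) := by
    rw [← hx, ← hy]; module
  have huv : u - v = x - y + α • (F x - F y) := by
    rw [← hx, ← hy]; module
  rw [hlhs, huv, div_mul_eq_mul_div, le_div_iff₀ (by positivity)]
  calc wNorm η (x - y - α • (F x - F y)) * (1 + α * c)
      ≤ (1 - α * c) * wNorm η (x - y) * (1 + α * c) := by
        gcongr; exact wNorm_sub_sub_smul_le hη hF' hα0.le hαc hαdiag hrow x y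
    _ = (1 - α * c) * ((1 + α * c) * wNorm η (x - y)) := by ring
    _ ≤ (1 - α * c) * wNorm η (x - y + α • (F x - F y)) := by
        gcongr
        exact mul_wNorm_le_wNorm_add_smul_sub hη hF' hα0.le hrow x y
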